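/- Let A be an n×n real symmetric positive semidefinite matrix, B an n×n real symmetric positive definite matrix, let y ∈ ℝⁿ be nonzero with y_i = 0 for some index i, and define R̃(α) = R(y + α e_i), q₁₂ = A_{ii}(By)_i − B_{ii}(Ay)_i, q₁₃ = A_{ii}(yᵀBy) − B_{ii}(yᵀAy), and q₂₃ = (Ay)_i(yᵀBy) − (By)_i(yᵀAy). If q₁₂ = 0 and q₁₃ < 0, then α* = −q₂₃/q₁₃ is the unique global maximizer of R̃ over ℝ: R̃(α) < R̃(α*) for every α ≠ α*. -/

import Mathlib

/-!
Along the line `y + α eᵢ` both quadratic forms are quadratics in `α`, so `R̃` is a ratio of two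
quadratics `N(α) / D(α)`. Cross-multiplying, `N(α) D(β) - N(β) D(α)` equals
`q₁₃ (α - β)² + 2αβ(α - β) q₁₂ + 2(α - β)(q₁₃ β + q₂₃)`; for `β = α*` the last two terms vanish,
leaving `q₁₃ (α - β)² < 0` whenever `α ≠ β`.
-/

open Matrix

theorem dotProduct_mulVec_add_smul_single {ι R : Type*} [Fintype ι] [DecidableEq ι] [CommRing R]
    {M : Matrix ι ι R} (hM : M.IsSymm) (y : ι → R) (i : ι) (α : R) :
    (y + α • Pi.single i 1) ⬝ᵥ M *ᵥ (y + α • Pi.single i 1) =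
      y ⬝ᵥ M *ᵥ y + 2 * α * (M *ᵥ y) i + α ^ 2 * M i i := by
  have hy_single : y ⬝ᵥ M *ᵥ Pi.single i 1 = (M *ᵥ y) i := by
    rw [dotProduct_mulVec, dotProduct_single_one, ← mulVec_transpose, hM.eq]
  have hsingle_single : Pi.single i 1 ⬝ᵥ M *ᵥ Pi.single i 1 = M i i := by
    rw [single_one_dotProduct, mulVec_single_one, col_apply]
  rw [mulVec_add, mulVec_smul, dotProduct_add, add_dotProduct, add_dotProduct, dotProduct_smul,
    dotProduct_smul, smul_dotProduct, smul_dotProduct, hy_single, single_one_dotProduct,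
    hsingle_single, smul_eq_mul, smul_eq_mul, smul_eq_mul]
  ring

theorem add_smul_single_ne_zero {ι R : Type*} [DecidableEq ι] [Semiring R] {y : ι → R}
    (hy : y ≠ 0) {i : ι} (hyi : y i = 0) (t : R) : y + t • Pi.single i 1 ≠ 0 := by
  obtain ⟨j, hj⟩ := Function.ne_iff.mp hy
  have hji : j ≠ i := by rintro rfl; exact hj hyi
  intro h
  exact hj (by simpa [hji] using congrFun h j)

theorem quadratic_ratio_lt_of_critical {K : Type*} [Field K] [LinearOrder K]
    [IsStrictOrderedRing K] {a b c d p q α β : K} (hq12 : a * q - b * p = 0)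
    (hq13 : a * d - b * c < 0) (hβ : β = -(p * d - q * c) / (a * d - b * c)) (hαβ : α ≠ β)
    (hDα : 0 < d + 2 * α * q + α ^ 2 * b) (hDβ : 0 < d + 2 * β * q + β ^ 2 * b) :
    (c + 2 * α * p + α ^ 2 * a) / (d + 2 * α * q + α ^ 2 * b) <
      (c + 2 * β * p + β ^ 2 * a) / (d + 2 * β * q + β ^ 2 * b) := by
  have hcrit : (a * d - b * c) * β + (p * d - q * c) = 0 := by
    rw [hβ, mul_div_cancel₀ _ hq13.ne]; ring
  have hcross : (c + 2 * α * p + α ^ 2 * a) * (d + 2 * β * q + β ^ 2 * b)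
      - (c + 2 * β * p + β ^ 2 * a) * (d + 2 * α * q + α ^ 2 * b)
      = (a * d - b * c) * (α - β) ^ 2 := by
    linear_combination (2 * α * β * (α - β)) * hq12 + (2 * (α - β)) * hcrit
  have hgap : (a * d - b * c) * (α - β) ^ 2 < 0 :=
    mul_neg_of_neg_of_pos hq13 (sq_pos_of_ne_zero (sub_ne_zero.mpr hαβ))
  rw [div_lt_div_iff₀ hDα hDβ]
  linarith

/-- If `q₁₂ = 0` and `q₁₃ < 0`, then `α* = −q₂₃/q₁₃` is the unique global maximizer
of `R̃(α) = R(y + α e_i)`. -/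
theorem rayleigh_unique_max_of_q12_zero_q13_neg {n : ℕ} (A B : Matrix (Fin n) (Fin n) ℝ)
    (hA : A.PosSemidef) (hB : B.PosDef) (y : Fin n → ℝ) (hy : y ≠ 0)
    (i : Fin n) (hyi : y i = 0)
    (hq12 : A i i * B.mulVec y i - B i i * A.mulVec y i = 0)
    (hq13 : A i i * (y ⬝ᵥ B.mulVec y) - B i i * (y ⬝ᵥ A.mulVec y) < 0) :
    ∀ α : ℝ,
      α ≠ -(A.mulVec y i * (y ⬝ᵥ B.mulVec y) - B.mulVec y i * (y ⬝ᵥ A.mulVec y)) /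
            (A i i * (y ⬝ᵥ B.mulVec y) - B i i * (y ⬝ᵥ A.mulVec y)) →
      ((y + α • (Pi.single i 1 : Fin n → ℝ)) ⬝ᵥ
          A.mulVec (y + α • (Pi.single i 1 : Fin n → ℝ))) /
        ((y + α • (Pi.single i 1 : Fin n → ℝ)) ⬝ᵥ
          B.mulVec (y + α • (Pi.single i 1 : Fin n → ℝ)))
      < (letI αs := -(A.mulVec y i * (y ⬝ᵥ B.mulVec y) - B.mulVec y i * (y ⬝ᵥ A.mulVec y)) /
            (A i i * (y ⬝ᵥ B.mulVec y) - B i i * (y ⬝ᵥ A.mulVec y))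
        ((y + αs • (Pi.single i 1 : Fin n → ℝ)) ⬝ᵥ
            A.mulVec (y + αs • (Pi.single i 1 : Fin n → ℝ))) /
          ((y + αs • (Pi.single i 1 : Fin n → ℝ)) ⬝ᵥ
            B.mulVec (y + αs • (Pi.single i 1 : Fin n → ℝ)))) := by
  intro α hα
  have hAsymm := isHermitian_iff_isSymm.mp hA.1
  have hBsymm := isHermitian_iff_isSymm.mp hB.1
  have hD : ∀ t : ℝ, 0 < y ⬝ᵥ B *ᵥ y + 2 * t * (B *ᵥ y) i + t ^ 2 * B i i := fun t => by
    simpa only [star_trivial, dotProduct_mulVec_add_smul_single hBsymm] using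
      hB.dotProduct_mulVec_pos (add_smul_single_ne_zero hy hyi t)
  simp only [dotProduct_mulVec_add_smul_single hAsymm, dotProduct_mulVec_add_smul_single hBsymm]
  exact quadratic_ratio_lt_of_critical hq12 hq13 rfl hα (hD α) (hD _)
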